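/- arXiv:2103.13456 — 6 statements merged into one kernel-verified Lean document; each statement's English description precedes it below -/
import Mathlib

section
/- Let U be a non-empty, proper open subset of the open unit cube (0,1)^n in ℝ^n. Then there exists a countable collection 𝒞 of closed axis-aligned cubes (products of closed intervals of equal length) such that: (1) the union of 𝒞 equals U; (2) distinct cubes in 𝒞 have disjoint interiors; (3) each cube in 𝒞 meets only finitely many other cubes of 𝒞; (4) every neighborhood of the boundary ∂U contains all but finitely many cubes of 𝒞. -/
/-!
For `x ∈ U` take the largest dyadic cube containing `x` (the one selected by `⌊2 ^ k * x⌋`)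
that still lies in `U`. Two such cubes whose interiors meet are nested, and maximality forces
them to coincide. If the Whitney cube of `x` has generation above `N`, its dyadic ancestor of
generation `N` leaves `U` although it has diameter `2⁻¹ ^ N`; so the cubes meeting a compact
subset of `U` have bounded generation and are finitely many. Both finiteness claims follow,
taking for the compact set a cube of the family, resp. `closure U \ V`.
-/

open Set Metric Bornology

variable {ι : Type*}

def dyadicCube (k : ℕ) (m : ι → ℤ) : Set (ι → ℝ) :=
  pi univ fun i => Icc ((m i : ℝ) / 2 ^ k) ((m i + 1) / 2 ^ k)

noncomputable def dyadicIndex (k : ℕ) (x : ι → ℝ) : ι → ℤ :=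
  fun i => ⌊2 ^ k * x i⌋

theorem mem_dyadicCube {k : ℕ} {m : ι → ℤ} {x : ι → ℝ} :
    x ∈ dyadicCube k m ↔ ∀ i, (m i : ℝ) ≤ 2 ^ k * x i ∧ 2 ^ k * x i ≤ m i + 1 := by
  simp only [dyadicCube, mem_univ_pi, mem_Icc, div_le_iff₀' (by positivity : (0:ℝ) < 2 ^ k),
    le_div_iff₀' (by positivity : (0:ℝ) < 2 ^ k)]

theorem dyadicCube_eq_pi_Icc (k : ℕ) (m : ι → ℤ) :
    dyadicCube k m = pi univ fun i => Icc ((m i : ℝ) / 2 ^ k) ((m i : ℝ) / 2 ^ k + (2 ^ k)⁻¹) := by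
  simp only [dyadicCube, add_div, one_div]

theorem mem_dyadicCube_dyadicIndex (k : ℕ) (x : ι → ℝ) : x ∈ dyadicCube k (dyadicIndex k x) :=
  mem_dyadicCube.2 fun _ => ⟨Int.floor_le _, (Int.lt_floor_add_one _).le⟩

theorem mem_Icc_floor_of_mul_mem_Icc_floor {N : ℕ} (hN : 0 < N) {s t : ℝ}
    (h : (N : ℝ) * s ∈ Icc (⌊N * t⌋ : ℝ) (⌊N * t⌋ + 1)) : s ∈ Icc (⌊t⌋ : ℝ) (⌊t⌋ + 1) := by
  have hN' : (0 : ℝ) < N := by exact_mod_cast hN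
  have lower : (N : ℤ) * ⌊t⌋ ≤ ⌊N * t⌋ :=
    Int.le_floor.2 (by push_cast; exact mul_le_mul_of_nonneg_left (Int.floor_le t) hN'.le)
  have upper : ⌊N * t⌋ < (N : ℤ) * (⌊t⌋ + 1) :=
    Int.floor_lt.2 (by push_cast; exact mul_lt_mul_of_pos_left (Int.lt_floor_add_one t) hN')
  have lower' : (N : ℝ) * ⌊t⌋ ≤ ⌊N * t⌋ := by exact_mod_cast lower
  have upper' : (⌊N * t⌋ : ℝ) + 1 ≤ N * (⌊t⌋ + 1) := by exact_mod_cast upper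
  exact ⟨le_of_mul_le_mul_left (lower'.trans h.1) hN',
    le_of_mul_le_mul_left (h.2.trans upper') hN'⟩

theorem dyadicCube_dyadicIndex_subset {j k : ℕ} (hjk : j ≤ k) (x : ι → ℝ) :
    dyadicCube k (dyadicIndex k x) ⊆ dyadicCube j (dyadicIndex j x) := by
  obtain ⟨d, rfl⟩ := Nat.exists_eq_add_of_le hjk
  intro y hy
  refine mem_dyadicCube.2 fun i =>
    mem_Icc_floor_of_mul_mem_Icc_floor (N := 2 ^ d) (by positivity) ?_
  have hscale : ∀ z : ℝ, ((2 ^ d : ℕ) : ℝ) * (2 ^ j * z) = 2 ^ (j + d) * z := fun z => by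
    push_cast; ring
  rw [hscale, hscale]
  exact mem_dyadicCube.1 hy i

theorem eq_dyadicIndex_of_mem_interior [Finite ι] {k : ℕ} {m : ι → ℤ} {z : ι → ℝ}
    (hz : z ∈ interior (dyadicCube k m)) : m = dyadicIndex k z := by
  rw [dyadicCube, interior_pi_set finite_univ, mem_univ_pi] at hz
  funext i
  have hk : (0 : ℝ) < 2 ^ k := by positivity
  obtain ⟨h₁, h₂⟩ := interior_Icc (α := ℝ) ▸ hz i
  rw [div_lt_iff₀' hk] at h₁
  rw [lt_div_iff₀' hk] at h₂
  exact (Int.floor_eq_iff.2 ⟨h₁.le, h₂⟩).symm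

noncomputable def whitneyGen (U : Set (ι → ℝ)) (x : ι → ℝ) : ℕ :=
  sInf {k | dyadicCube k (dyadicIndex k x) ⊆ U}

noncomputable def whitneyCube (U : Set (ι → ℝ)) (x : ι → ℝ) : Set (ι → ℝ) :=
  dyadicCube (whitneyGen U x) (dyadicIndex (whitneyGen U x) x)

noncomputable def whitneyCubes (U : Set (ι → ℝ)) : Set (Set (ι → ℝ)) :=
  whitneyCube U '' U

theorem mem_whitneyCube (U : Set (ι → ℝ)) (x : ι → ℝ) : x ∈ whitneyCube U x :=
  mem_dyadicCube_dyadicIndex _ x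

theorem whitneyGen_le {U : Set (ι → ℝ)} {x : ι → ℝ} {k : ℕ}
    (h : dyadicCube k (dyadicIndex k x) ⊆ U) : whitneyGen U x ≤ k :=
  Nat.sInf_le h

theorem not_dyadicCube_subset_of_lt_whitneyGen {U : Set (ι → ℝ)} {x : ι → ℝ} {k : ℕ}
    (h : k < whitneyGen U x) : ¬ dyadicCube k (dyadicIndex k x) ⊆ U :=
  Nat.notMem_of_lt_sInf h

theorem whitneyCube_eq_of_mem_interior [Finite ι] {U : Set (ι → ℝ)} {x y z : ι → ℝ}
    (hyU : whitneyCube U y ⊆ U) (hgen : whitneyGen U y ≤ whitneyGen U x)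
    (hzx : z ∈ interior (whitneyCube U x)) (hzy : z ∈ interior (whitneyCube U y)) :
    whitneyCube U x = whitneyCube U y := by
  have hxz : dyadicIndex (whitneyGen U y) x = dyadicIndex (whitneyGen U y) z :=
    eq_dyadicIndex_of_mem_interior (interior_mono (dyadicCube_dyadicIndex_subset hgen x) hzx)
  have hyz : dyadicIndex (whitneyGen U y) y = dyadicIndex (whitneyGen U y) z :=
    eq_dyadicIndex_of_mem_interior hzy
  have hgen_eq : whitneyGen U x = whitneyGen U y :=
    le_antisymm (whitneyGen_le (by rwa [hxz, ← hyz])) hgen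
  rw [whitneyCube, whitneyCube, hgen_eq, hxz, hyz]

theorem countable_whitneyCubes [Finite ι] (U : Set (ι → ℝ)) : (whitneyCubes U).Countable :=
  (countable_range fun p : ℕ × (ι → ℤ) => dyadicCube p.1 p.2).mono <| by
    rintro _ ⟨x, -, rfl⟩
    exact ⟨(_, _), rfl⟩

section Fintype

variable [Fintype ι]

theorem dist_le_of_mem_dyadicCube {k : ℕ} {m : ι → ℤ} {x y : ι → ℝ}
    (hx : x ∈ dyadicCube k m) (hy : y ∈ dyadicCube k m) : dist x y ≤ (2⁻¹ : ℝ) ^ k := by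
  refine (dist_pi_le_iff (by positivity)).2 fun i => ?_
  obtain ⟨hx₁, hx₂⟩ := mem_dyadicCube.1 hx i
  obtain ⟨hy₁, hy₂⟩ := mem_dyadicCube.1 hy i
  have hk : (0 : ℝ) < 2 ^ k := by positivity
  have hscaled : |2 ^ k * x i - 2 ^ k * y i| ≤ 1 := abs_le.2 ⟨by linarith, by linarith⟩
  calc dist (x i) (y i) = (2 ^ k)⁻¹ * |2 ^ k * x i - 2 ^ k * y i| := by
        rw [Real.dist_eq, ← mul_sub, abs_mul, abs_of_pos hk, inv_mul_cancel_left₀ hk.ne']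
    _ ≤ (2⁻¹ : ℝ) ^ k := by
        rw [inv_pow]
        exact mul_le_of_le_one_right (by positivity) hscaled

theorem exists_dyadicCube_subset {U : Set (ι → ℝ)} (hU : IsOpen U) {x : ι → ℝ} (hx : x ∈ U) :
    ∃ k, dyadicCube k (dyadicIndex k x) ⊆ U := by
  obtain ⟨ε, hε, hball⟩ := isOpen_iff.1 hU x hx
  obtain ⟨k, hk⟩ := exists_pow_lt_of_lt_one hε (by norm_num : (2⁻¹ : ℝ) < 1)
  exact ⟨k, fun y hy => hball <|
    (dist_le_of_mem_dyadicCube hy (mem_dyadicCube_dyadicIndex k x)).trans_lt hk⟩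

theorem finite_setOf_dyadicCube_inter_nonempty {S : Set (ι → ℝ)} (hS : IsBounded S) (k : ℕ) :
    {m : ι → ℤ | (dyadicCube k m ∩ S).Nonempty}.Finite := by
  obtain ⟨R, hR⟩ := hS.subset_closedBall 0
  refine (Finite.pi fun _ => finite_Icc (⌈-(2 ^ k * R)⌉ - 1) ⌊2 ^ k * R⌋).subset ?_
  rintro m ⟨z, hzm, hzS⟩ i -
  obtain ⟨h₁, h₂⟩ := mem_dyadicCube.1 hzm i
  have hzi : |z i| ≤ R :=
    (norm_le_pi_norm z i).trans (mem_closedBall_zero_iff.1 (hR hzS))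
  have hscaled : |2 ^ k * z i| ≤ 2 ^ k * R := by
    rw [abs_mul, abs_of_pos (by positivity)]
    exact mul_le_mul_of_nonneg_left hzi (by positivity)
  obtain ⟨hlo, hhi⟩ := abs_le.1 hscaled
  constructor
  · rw [sub_le_iff_le_add, Int.ceil_le]
    push_cast
    linarith
  · exact Int.le_floor.2 (by linarith)

theorem whitneyCube_subset {U : Set (ι → ℝ)} (hU : IsOpen U) {x : ι → ℝ} (hx : x ∈ U) :
    whitneyCube U x ⊆ U :=
  Nat.sInf_mem (exists_dyadicCube_subset hU hx)

theorem sUnion_whitneyCubes {U : Set (ι → ℝ)} (hU : IsOpen U) : ⋃₀ whitneyCubes U = U := by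
  refine Subset.antisymm ?_ fun x hx => ⟨_, mem_image_of_mem _ hx, mem_whitneyCube U x⟩
  rintro z ⟨_, ⟨x, hx, rfl⟩, hz⟩
  exact whitneyCube_subset hU hx hz

theorem pairwise_interior_inter_whitneyCubes {U : Set (ι → ℝ)} (hU : IsOpen U) :
    (whitneyCubes U).Pairwise fun C C' => interior C ∩ interior C' = ∅ := by
  rintro _ ⟨x, hx, rfl⟩ _ ⟨y, hy, rfl⟩ hne
  rw [← not_nonempty_iff_eq_empty]
  rintro ⟨z, hzx, hzy⟩
  rcases le_total (whitneyGen U y) (whitneyGen U x) with hgen | hgen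
  · exact hne (whitneyCube_eq_of_mem_interior (whitneyCube_subset hU hy) hgen hzx hzy)
  · exact hne (whitneyCube_eq_of_mem_interior (whitneyCube_subset hU hx) hgen hzy hzx).symm

theorem whitneyGen_le_of_ball_subset {U : Set (ι → ℝ)} {x z : ι → ℝ} {δ : ℝ} {N : ℕ}
    (hz : z ∈ whitneyCube U x) (hball : ball z δ ⊆ U) (hN : (2⁻¹ : ℝ) ^ N < δ) :
    whitneyGen U x ≤ N := by
  by_contra! hlt
  obtain ⟨y, hy, hyU⟩ := not_subset.1 (not_dyadicCube_subset_of_lt_whitneyGen hlt)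
  have hzN : z ∈ dyadicCube N (dyadicIndex N x) := dyadicCube_dyadicIndex_subset hlt.le x hz
  exact hyU (hball (mem_ball.2 ((dist_le_of_mem_dyadicCube hy hzN).trans_lt hN)))

theorem finite_whitneyCubes_inter_nonempty {U K : Set (ι → ℝ)} (hU : IsOpen U)
    (hK : IsCompact K) (hKU : K ⊆ U) : {C ∈ whitneyCubes U | (C ∩ K).Nonempty}.Finite := by
  obtain ⟨δ, hδ, hthick⟩ := hK.exists_thickening_subset_open hU hKU
  obtain ⟨N, hN⟩ := exists_pow_lt_of_lt_one hδ (by norm_num : (2⁻¹ : ℝ) < 1)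
  refine ((finite_Iic N).biUnion fun k _ =>
    (finite_setOf_dyadicCube_inter_nonempty hK.isBounded k).image (dyadicCube k)).subset ?_
  rintro _ ⟨⟨x, -, rfl⟩, z, hzC, hzK⟩
  have hball : ball z δ ⊆ U := (ball_subset_thickening hzK δ).trans hthick
  exact mem_biUnion (mem_Iic.2 (whitneyGen_le_of_ball_subset hzC hball hN))
    (mem_image_of_mem _ ⟨z, hzC, hzK⟩)

theorem finite_whitneyCubes_not_subset {U V : Set (ι → ℝ)} (hU : IsOpen U) (hUb : IsBounded U)
    (hV : IsOpen V) (hUV : frontier U ⊆ V) : {C ∈ whitneyCubes U | ¬ C ⊆ V}.Finite := by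
  have hKU : closure U \ V ⊆ U := fun x ⟨hxU, hxV⟩ =>
    by_contra fun hx => hxV (hUV (hU.frontier_eq ▸ ⟨hxU, hx⟩))
  refine (finite_whitneyCubes_inter_nonempty hU (hUb.isCompact_closure.diff hV) hKU).subset ?_
  rintro C ⟨hC, hCV⟩
  obtain ⟨z, hzC, hzV⟩ := not_subset.1 hCV
  have hzU : z ∈ U := sUnion_whitneyCubes hU ▸ mem_sUnion_of_mem hzC hC
  exact ⟨hC, z, hzC, subset_closure hzU, hzV⟩

end Fintype

theorem whitney_covering_general (n : ℕ) (U : Set (Fin n → ℝ))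
    (hUopen : IsOpen U)
    (hUsub : U ⊆ Set.pi Set.univ fun _ => Set.Ioo (0:ℝ) 1) :
    ∃ 𝒞 : Set (Set (Fin n → ℝ)),
      𝒞.Countable ∧
      (∀ C ∈ 𝒞, ∃ (c : Fin n → ℝ) (δ : ℝ), 0 < δ ∧
        C = Set.pi Set.univ fun i => Set.Icc (c i) (c i + δ)) ∧
      ⋃₀ 𝒞 = U ∧
      (𝒞.Pairwise fun C C' => interior C ∩ interior C' = ∅) ∧
      (∀ C ∈ 𝒞, {C' | C' ∈ 𝒞 ∧ C' ≠ C ∧ (C ∩ C').Nonempty}.Finite) ∧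
      (∀ V : Set (Fin n → ℝ), IsOpen V → frontier U ⊆ V →
        {C | C ∈ 𝒞 ∧ ¬ C ⊆ V}.Finite) := by
  have hUb : IsBounded U := (isCompact_univ_pi fun _ => isCompact_Icc).isBounded.subset
    (hUsub.trans (pi_mono fun _ _ => Ioo_subset_Icc_self (a := (0 : ℝ)) (b := 1)))
  refine ⟨whitneyCubes U, countable_whitneyCubes U, ?_, sUnion_whitneyCubes hUopen,
    pairwise_interior_inter_whitneyCubes hUopen, ?_,
    fun V hV hUV => finite_whitneyCubes_not_subset hUopen hUb hV hUV⟩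
  · rintro _ ⟨x, -, rfl⟩
    exact ⟨_, _, by positivity, dyadicCube_eq_pi_Icc _ _⟩
  · rintro _ ⟨x, hx, rfl⟩
    refine (finite_whitneyCubes_inter_nonempty hUopen (isCompact_univ_pi fun _ => isCompact_Icc)
      (whitneyCube_subset hUopen hx)).subset ?_
    rintro C ⟨hC, -, hmeet⟩
    exact ⟨hC, inter_comm C _ ▸ hmeet⟩

/-- **Whitney Covering Lemma** (version for open subsets of the open unit cube).
If `U` is a non-empty proper open subset of `(0,1)^n ⊆ ℝ^n`, there is a countable collection
`𝒞` of closed axis-aligned cubes (products of closed intervals of equal length) such that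
the union of `𝒞` is `U`, distinct cubes have disjoint interiors, each cube meets only finitely
many other cubes, and every neighborhood of `∂U` contains all but finitely many cubes. -/
theorem whitney_covering (n : ℕ) (U : Set (Fin n → ℝ))
    (hUopen : IsOpen U) (hUne : U.Nonempty)
    (hUsub : U ⊆ Set.pi Set.univ fun _ => Set.Ioo (0:ℝ) 1)
    (hUproper : U ≠ Set.pi Set.univ fun _ => Set.Ioo (0:ℝ) 1) :
    ∃ 𝒞 : Set (Set (Fin n → ℝ)),
      𝒞.Countable ∧
      (∀ C ∈ 𝒞, ∃ (c : Fin n → ℝ) (δ : ℝ), 0 < δ ∧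
        C = Set.pi Set.univ fun i => Set.Icc (c i) (c i + δ)) ∧
      ⋃₀ 𝒞 = U ∧
      (𝒞.Pairwise fun C C' => interior C ∩ interior C' = ∅) ∧
      (∀ C ∈ 𝒞, {C' | C' ∈ 𝒞 ∧ C' ≠ C ∧ (C ∩ C').Nonempty}.Finite) ∧
      (∀ V : Set (Fin n → ℝ), IsOpen V → frontier U ⊆ V →
        {C | C ∈ 𝒞 ∧ ¬ C ⊆ V}.Finite) :=
  whitney_covering_general n U hUopen hUsub
end

section
/- A topological space X is sequentially 0-connected at a point x (i.e., every sequence of based maps S⁰ → X converging to x is sequentially null-homotopic rel basepoint) if and only if for every sequence {x_k} in X converging to x there exists a continuous path α : [0,1] → X with α(0) = x and α(1/k) = x_k for all k ∈ ℕ. -/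
/-!
A based map `S⁰ → X` is a point of `X`, and a based null-homotopy of it is a path to `x`; so a
sequential null-homotopy of `x_k → x` is a sequence of paths `γ_k` from `x_k` to `x` whose images
shrink to `x`. Joining `x_{k+1}` to `x_k` through `x` (along `γ_{k+1}`, then `γ_k` backwards) on
`[1/(k+1), 1/k]` gives a path that is continuous at `0` precisely because the images shrink.
Conversely, a path `α` through the `x_k` restricts to paths `α|[0, 1/k]` from `x_k` to `x`, which
shrink to `x` by continuity of `α` at `0`.
-/

open Set unitInterval

/-- A countable family of maps clusters at (converges toward) a point. -/
def ClustersAt {K Z X : Type*} [TopologicalSpace Z] [TopologicalSpace X]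
    (f : K → C(Z, X)) (x : X) : Prop :=
  ∀ U ∈ nhds x, {k : K | ¬ Set.range (f k) ⊆ U}.Finite

/-- The point `1/(k+1)` of the unit interval. -/
noncomputable def invPt (k : ℕ) : I :=
  ⟨1 / (k + 1 : ℝ), by
    constructor
    · positivity
    · rw [div_le_one (by positivity)]
      have : (0:ℝ) ≤ (k : ℝ) := Nat.cast_nonneg k
      linarith⟩

open Filter Topology

theorem clustersAt_iff_tendsto_smallSets {K Z X : Type*} [TopologicalSpace Z]
    [TopologicalSpace X] (f : K → C(Z, X)) (x : X) :
    ClustersAt f x ↔ Tendsto (fun k => range (f k)) cofinite (𝓝 x).smallSets := by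
  simp only [ClustersAt, tendsto_smallSets_iff, eventually_cofinite]

theorem tendsto_invPt : Tendsto invPt atTop (𝓝 0) :=
  tendsto_subtype_rng.mpr tendsto_one_div_add_atTop_nhds_zero_nat

theorem invPt_inv_sub_one (k : ℕ) : ((invPt k : ℝ))⁻¹ - 1 = k := by
  simp [invPt]

section Compactification

variable {X : Type*} [TopologicalSpace X]

theorem exists_continuousMap_unitInterval_of_tendsto_atTop {β : ℝ → X} {x : X}
    (hβ : ContinuousOn β (Ici 0)) (hlim : Tendsto β atTop (𝓝 x)) :
    ∃ α : C(I, X), α 0 = x ∧ ∀ s : I, (s : ℝ) ≠ 0 → α s = β ((s : ℝ)⁻¹ - 1) := by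
  classical
  set g : ℝ → X := Function.update (fun s => β (s⁻¹ - 1)) 0 x
  have hg : ContinuousOn g (Icc 0 1) := by
    intro s hs
    rcases eq_or_ne s 0 with rfl | hs0
    · rw [continuousWithinAt_update_same]
      have hinv : Tendsto (fun s : ℝ => s⁻¹ - 1) (𝓝[>] 0) atTop :=
        tendsto_atTop_add_const_right _ _ tendsto_inv_nhdsGT_zero
      exact (hlim.comp hinv).mono_left
        (nhdsWithin_mono _ fun t ht => lt_of_le_of_ne ht.1.1 (Ne.symm ht.2))
    · have hpos : 0 < s := lt_of_le_of_ne hs.1 (Ne.symm hs0)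
      have hmaps : MapsTo (fun t : ℝ => t⁻¹ - 1) (Icc 0 1 ∩ Ioi 0) (Ici 0) :=
        fun t ⟨⟨_, ht1⟩, ht0⟩ => sub_nonneg.mpr ((one_le_inv₀ ht0).mpr ht1)
      rw [continuousWithinAt_update_of_ne hs0, ← continuousWithinAt_inter (Ioi_mem_nhds hpos)]
      have hinv : ContinuousAt (fun t : ℝ => t⁻¹ - 1) s :=
        (continuousAt_inv₀ hs0).sub continuousAt_const
      exact ContinuousWithinAt.comp (hβ _ (hmaps ⟨hs, hpos⟩)) hinv.continuousWithinAt hmaps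
  refine ⟨⟨fun s => g s, hg.domRestrict⟩, ?_, fun s hs => ?_⟩
  · change g 0 = x
    simp [g]
  · change g s = _
    simp [g, hs]

end Compactification

section Concat

variable {X : Type*} [TopologicalSpace X] {p : ℕ → X}

noncomputable def Path.seqConcat (δ : ∀ n, Path (p n) (p (n + 1))) (r : ℝ) : X :=
  (δ ⌊r⌋₊).extend (r - ⌊r⌋₊)

theorem Path.seqConcat_eq_of_mem_Icc (δ : ∀ n, Path (p n) (p (n + 1))) {n : ℕ} {r : ℝ}
    (hr : r ∈ Icc (n : ℝ) (n + 1)) : Path.seqConcat δ r = (δ n).extend (r - n) := by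
  rcases hr.2.lt_or_eq with hlt | rfl
  · rw [Path.seqConcat, Nat.floor_eq_on_Ico n r ⟨hr.1, hlt⟩]
  · rw [Path.seqConcat, ← Nat.cast_succ, Nat.floor_natCast, sub_self, Nat.cast_succ,
      add_sub_cancel_left, Path.extend_zero, Path.extend_one]

theorem Path.seqConcat_natCast (δ : ∀ n, Path (p n) (p (n + 1))) (n : ℕ) :
    Path.seqConcat δ n = p n := by
  simp [Path.seqConcat]

theorem Path.continuousOn_seqConcat (δ : ∀ n, Path (p n) (p (n + 1))) :
    ContinuousOn (Path.seqConcat δ) (Ici 0) := by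
  have hfin : LocallyFinite fun n : ℕ => Icc (n : ℝ) (n + 1) :=
    (locallyFinite_Icc_of_tendsto (f := fun n : ℤ => (n : ℝ)) (g := fun n => n + 1)
      tendsto_intCast_atTop_atTop (tendsto_atBot_add_const_right _ _
        (tendsto_intCast_atBot_iff.2 tendsto_id))).comp_injective Nat.cast_injective
  have hcover : (⋃ n : ℕ, Icc (n : ℝ) (n + 1)) = Ici 0 := by
    refine Subset.antisymm (iUnion_subset fun n r hr => le_trans n.cast_nonneg hr.1) fun r hr => ?_
    exact mem_iUnion.mpr ⟨⌊r⌋₊, Nat.floor_le hr, (Nat.lt_floor_add_one r).le⟩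
  rw [← hcover]
  refine hfin.continuousOn_iUnion (fun n => isClosed_Icc) fun n => ?_
  refine ((δ n).continuous_extend.comp (continuous_sub_right (n : ℝ))).continuousOn.congr ?_
  exact fun r hr => Path.seqConcat_eq_of_mem_Icc δ hr

theorem Path.tendsto_seqConcat (δ : ∀ n, Path (p n) (p (n + 1))) {x : X}
    (hδ : Tendsto (fun n => range (δ n)) atTop (𝓝 x).smallSets) :
    Tendsto (Path.seqConcat δ) atTop (𝓝 x) := by
  refine (hδ.comp (tendsto_nat_floor_atTop (α := ℝ))).of_smallSets (Eventually.of_forall fun r => ?_)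
  rw [Function.comp_apply, ← Path.extend_range]
  exact mem_range_self _

end Concat

section Paths

variable {X : Type*} [TopologicalSpace X]

theorem exists_continuousMap_invPt_of_tendsto_range {p : ℕ → X} {x : X}
    (δ : ∀ n, Path (p n) (p (n + 1)))
    (hδ : Tendsto (fun n => range (δ n)) atTop (𝓝 x).smallSets) :
    ∃ α : C(I, X), α 0 = x ∧ ∀ k, α (invPt k) = p k := by
  obtain ⟨α, hα0, hα⟩ := exists_continuousMap_unitInterval_of_tendsto_atTop
    (Path.continuousOn_seqConcat δ) (Path.tendsto_seqConcat δ hδ)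
  refine ⟨α, hα0, fun k => ?_⟩
  have hk : (invPt k : ℝ) ≠ 0 := one_div_ne_zero (Nat.cast_add_one_ne_zero k)
  rw [hα _ hk, invPt_inv_sub_one, Path.seqConcat_natCast]

theorem exists_continuousMap_invPt_of_paths_to {q : ℕ → X} {x : X} (γ : ∀ k, Path (q k) x)
    (hγ : Tendsto (fun k => range (γ k)) atTop (𝓝 x).smallSets) :
    ∃ α : C(I, X), α 0 = x ∧ ∀ k, α (invPt k) = q k := by
  refine exists_continuousMap_invPt_of_tendsto_range (fun k => (γ k).trans (γ (k + 1)).symm) ?_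
  simp only [Path.trans_range, Path.symm_range]
  rw [tendsto_smallSets_iff] at hγ ⊢
  exact fun U hU => (hγ U hU).and ((tendsto_add_atTop_nat 1).eventually (hγ U hU))
    |>.mono fun _ h => union_subset h.1 h.2

end Paths

/-- A based null-homotopy in `I` of the map `S⁰ → I` sending `false` to `invPt k`. -/
noncomputable def invPtContraction (k : ℕ) : C(Bool × I, I) where
  toFun q := cond q.1 0 (σ q.2 * invPt k)
  continuous_toFun := continuous_prod_of_discrete_left.mpr fun b => by
    cases b <;> dsimp only [cond] <;> fun_prop

theorem range_invPtContraction_subset (k : ℕ) : range (invPtContraction k) ⊆ Icc 0 (invPt k) := by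
  rintro _ ⟨⟨b, t⟩, rfl⟩
  cases b
  · exact ⟨nonneg', mul_le_right⟩
  · exact ⟨le_rfl, nonneg'⟩

theorem tendsto_Icc_invPt : Tendsto (fun k => Icc 0 (invPt k)) atTop (𝓝 0).smallSets :=
  tendsto_const_nhds.Icc tendsto_invPt

section Clusters

variable {X : Type*} [TopologicalSpace X]

theorem ClustersAt.tendsto_apply {K Z : Type*} [TopologicalSpace Z] {f : K → C(Z, X)} {x : X}
    (hf : ClustersAt f x) (z : Z) : Tendsto (fun k => f k z) cofinite (𝓝 x) :=
  ((clustersAt_iff_tendsto_smallSets f x).mp hf).of_smallSets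
    (Eventually.of_forall fun _ => mem_range_self z)

theorem clustersAt_cond {K : Type*} {u : K → X} {x : X} (hu : Tendsto u cofinite (𝓝 x)) :
    ClustersAt (fun k => (⟨fun b => cond b x (u k), continuous_of_discreteTopology⟩ : C(Bool, X)))
      x := by
  rw [clustersAt_iff_tendsto_smallSets, tendsto_smallSets_iff]
  intro U hU
  filter_upwards [hu hU] with k hk
  rintro _ ⟨b, rfl⟩
  cases b
  exacts [hk, mem_of_mem_nhds hU]

theorem clustersAt_comp_invPtContraction (α : C(I, X)) :
    ClustersAt (fun k => α.comp (invPtContraction k)) (α 0) := by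
  rw [clustersAt_iff_tendsto_smallSets, Nat.cofinite_eq_atTop]
  refine ((α.continuous.tendsto 0).image_smallSets.comp tendsto_Icc_invPt).smallSets_mono
    (Eventually.of_forall fun k => ?_)
  rw [ContinuousMap.coe_comp, range_comp]
  exact image_mono (range_invPtContraction_subset k)

end Clusters

/-- `X` is sequentially 0-connected at `x` (every sequence of based maps `S⁰ → X` converging
to `x` is sequentially null-homotopic rel basepoint, where `S⁰ = Bool` with basepoint `true`)
if and only if for every sequence `x_k → x` there is a path `α` with `α 0 = x` and
`α (1/k) = x_k` for all `k ≥ 1`. -/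
theorem seqZeroConnected_iff_path {X : Type*} [TopologicalSpace X] (x : X) :
    (∀ f : ℕ → C(Bool, X), (∀ k, f k true = x) → ClustersAt f x →
      ∃ H : ℕ → C(Bool × I, X),
        (∀ k b, H k (b, 0) = f k b) ∧ (∀ k b, H k (b, 1) = x) ∧
        (∀ k t, H k (true, t) = x) ∧ ClustersAt H x) ↔
    (∀ u : ℕ → X, Filter.Tendsto u Filter.atTop (nhds x) →
      ∃ α : C(I, X), α 0 = x ∧ ∀ k : ℕ, α (invPt k) = u (k + 1)) := by
  constructor
  · intro h u hu
    have hu' : Tendsto (fun k => u (k + 1)) cofinite (𝓝 x) :=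
      Nat.cofinite_eq_atTop ▸ hu.comp (tendsto_add_atTop_nat 1)
    obtain ⟨H, hH0, hH1, -, hH⟩ := h _ (fun _ => rfl) (clustersAt_cond hu')
    let γ k : Path (u (k + 1)) x :=
      { toFun t := H k (false, t), source' := hH0 k false, target' := hH1 k false }
    refine exists_continuousMap_invPt_of_paths_to γ ?_
    rw [clustersAt_iff_tendsto_smallSets, Nat.cofinite_eq_atTop] at hH
    exact hH.smallSets_mono (Eventually.of_forall fun k => range_subset_iff.mpr fun t =>
      mem_range_self (false, t))
  · intro h f hfx hf
    have hu : Tendsto (fun k => f (k - 1) false) atTop (𝓝 x) :=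
      (Nat.cofinite_eq_atTop ▸ hf.tendsto_apply false).comp (tendsto_sub_atTop_nat 1)
    obtain ⟨α, hα0, hα⟩ := h _ hu
    refine ⟨fun k => α.comp (invPtContraction k), fun k b => ?_, fun k b => ?_, fun k t => ?_,
      hα0 ▸ clustersAt_comp_invPtContraction α⟩
    · cases b
      · simpa [invPtContraction] using hα k
      · simpa [invPtContraction, hα0] using (hfx k).symm
    · cases b <;> simpa [invPtContraction] using hα0
    · simpa [invPtContraction] using hα0
end

section
/- If {(X_j, x_j)}_{j∈J} is a family of based spaces, each sequentially n-connected at its basepoint, then the product space ∏_{j∈J} X_j is sequentially n-connected at the point (x_j)_{j∈J}. -/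
open Set unitInterval

/-- `X` is sequentially `n`-connected at `x`: for each `0 ≤ k ≤ n`, every sequence of based
`k`-loops (maps `I^k → X` sending the boundary of the cube, i.e. `S^k → X` based maps, to `x`)
that converges to `x` admits a sequence of based null-homotopies converging to `x`. -/
def SeqNConnectedAt (n : ℕ) (X : Type*) [TopologicalSpace X] (x : X) : Prop :=
  ∀ k ≤ n, ∀ f : ℕ → C((Fin k → I), X),
    (∀ m, ∀ y ∈ Cube.boundary (Fin k), f m y = x) →
    ClustersAt f x →
    ∃ H : ℕ → C((Fin k → I) × I, X),
      (∀ m y, H m (y, 0) = f m y) ∧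
      (∀ m y, H m (y, 1) = x) ∧
      (∀ m t, ∀ y ∈ Cube.boundary (Fin k), H m (y, t) = x) ∧
      ClustersAt H x

open Filter Topology

section ClustersAt

variable {K Z X : Type*} [TopologicalSpace Z] [TopologicalSpace X]

theorem clustersAt_iff_eventually {f : K → C(Z, X)} {x : X} :
    ClustersAt f x ↔ ∀ U ∈ 𝓝 x, ∀ᶠ k in cofinite, range (f k) ⊆ U := by
  simp only [ClustersAt, eventually_cofinite]

theorem ClustersAt.continuousMap_comp {Y : Type*} [TopologicalSpace Y] {f : K → C(Z, X)}
    {x : X} (hf : ClustersAt f x) (g : C(X, Y)) :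
    ClustersAt (fun k => g.comp (f k)) (g x) := by
  rw [clustersAt_iff_eventually] at hf ⊢
  intro U hU
  filter_upwards [hf _ (g.continuous.continuousAt.preimage_mem_nhds hU)] with k hk
  rw [ContinuousMap.coe_comp, range_comp, image_subset_iff]
  exact hk

end ClustersAt

/-- A basic neighbourhood of `x` in the product constrains only finitely many coordinates, and
finitely many cofinite conditions hold together cofinitely often. -/
theorem clustersAt_pi_iff {K Z J : Type*} {X : J → Type*} [TopologicalSpace Z]
    [∀ j, TopologicalSpace (X j)] {f : K → C(Z, ∀ j, X j)} {x : ∀ j, X j} :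
    ClustersAt f x ↔ ∀ j, ClustersAt (fun k => (ContinuousMap.eval j).comp (f k)) (x j) := by
  refine ⟨fun hf j => hf.continuousMap_comp (ContinuousMap.eval j), fun h => ?_⟩
  simp only [clustersAt_iff_eventually] at h ⊢
  intro U hU
  obtain ⟨s, hs, t, ht, hsub⟩ := Filter.mem_pi.1 (nhds_pi (a := x) ▸ hU)
  filter_upwards [(eventually_all_finite hs).2 fun j _ => h j (t j) (ht j)] with k hk
  rintro _ ⟨z, rfl⟩
  exact hsub fun j hj => hk j hj ⟨z, rfl⟩

/-- A product of based spaces, each sequentially `n`-connected at its basepoint, is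
sequentially `n`-connected at the point `(x_j)_{j∈J}`. -/
theorem seqNConnectedAt_pi {J : Type*} (n : ℕ) (X : J → Type*)
    [∀ j, TopologicalSpace (X j)] (x : ∀ j, X j)
    (h : ∀ j, SeqNConnectedAt n (X j) (x j)) :
    SeqNConnectedAt n (∀ j, X j) x := by
  intro k hk f hf_bd hf
  have hcomp j := h j k hk (fun m => (ContinuousMap.eval j).comp (f m))
    (fun m y hy => by simp [hf_bd m y hy]) (clustersAt_pi_iff.1 hf j)
  choose H hH_zero hH_one hH_bd hH using hcomp
  refine ⟨fun m => ContinuousMap.pi fun j => H j m, fun m y => ?_, fun m y => ?_,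
    fun m t y hy => ?_, clustersAt_pi_iff.2 hH⟩ <;> funext j
  · exact hH_zero j m y
  · exact hH_one j m y
  · exact hH_bd j m t y hy
end

section
/- Suppose (Y, y₀) is sequentially 0-connected and (X, x₀) is well-pointed (the inclusion {x₀} → X is a cofibration). Then every sequence {f_k} of continuous maps X → Y that converges to y₀ is sequentially (freely) homotopic to a sequence {g_k} of based maps (X, x₀) → (Y, y₀) that converges to y₀. -/
/-!
Since `{x₀} → X` is a cofibration, `X × I` retracts onto `X × {0} ∪ {x₀} × I`. Choose paths
`α_k` from `y₀` to `f_k x₀` converging to `y₀`. Extending `f_k` on `X × {0}` and the reversed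
path on `{x₀} × I` to `X × I` gives no control on the image, but precomposing the extension with
the retraction gives a homotopy `H_k` whose image lies in `Im f_k ∪ Im α_k`; hence `{H_k}` converges to `y₀`, and so does `g_k = H_k(-, 1)`,
which is based because `g_k x₀ = α_k 0 = y₀`.
-/

open Set unitInterval

universe u

/-- `(Y, y₀)` is sequentially 0-connected: every sequence `y_k → y₀` admits a sequence of
paths from `y₀` to `y_k` converging to `y₀`. -/
def SeqZeroConnectedAt (Y : Type*) [TopologicalSpace Y] (y₀ : Y) : Prop :=
  ∀ u : ℕ → Y, Filter.Tendsto u Filter.atTop (nhds y₀) →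
    ∃ α : ℕ → C(I, Y), (∀ k, α k 0 = y₀ ∧ α k 1 = u k) ∧ ClustersAt α y₀

/-- `i : A → X` is a cofibration: it has the homotopy extension property. -/
def IsCofibration {A X : Type u} [TopologicalSpace A] [TopologicalSpace X]
    (i : C(A, X)) : Prop :=
  ∀ (Z : Type u) [TopologicalSpace Z] (f : C(X, Z)) (H : C(A × I, Z)),
    (∀ a, H (a, 0) = f (i a)) →
    ∃ G : C(X × I, Z), (∀ x, G (x, 0) = f x) ∧ ∀ a t, G (i a, t) = H (a, t)

open Filter Topology

namespace ClustersAt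

variable {K Z₁ Z₂ Z₃ X : Type*} [TopologicalSpace Z₁] [TopologicalSpace Z₂]
  [TopologicalSpace Z₃] [TopologicalSpace X] {x : X}

theorem iff_eventually {f : K → C(Z₁, X)} :
    ClustersAt f x ↔ ∀ U ∈ 𝓝 x, ∀ᶠ k in cofinite, range (f k) ⊆ U := by
  simp only [ClustersAt, eventually_cofinite]

theorem tendsto_apply_s6 {f : K → C(Z₁, X)} (hf : ClustersAt f x) (z : Z₁) :
    Tendsto (fun k => f k z) cofinite (𝓝 x) := fun U hU =>
  (iff_eventually.1 hf U hU).mono fun _ hk => hk (mem_range_self z)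

theorem of_range_subset_union {f : K → C(Z₁, X)} {g : K → C(Z₂, X)} {e : K → C(Z₃, X)}
    (hf : ClustersAt f x) (hg : ClustersAt g x)
    (he : ∀ k, range (e k) ⊆ range (f k) ∪ range (g k)) : ClustersAt e x := by
  refine iff_eventually.2 fun U hU => ?_
  filter_upwards [iff_eventually.1 hf U hU, iff_eventually.1 hg U hU] with k hfk hgk
  exact (he k).trans (union_subset hfk hgk)

theorem of_range_subset {f : K → C(Z₁, X)} {e : K → C(Z₂, X)} (hf : ClustersAt f x)
    (he : ∀ k, range (e k) ⊆ range (f k)) : ClustersAt e x :=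
  hf.of_range_subset_union hf fun k => (he k).trans subset_union_left

end ClustersAt

namespace IsCofibration

variable {A X : Type u} [TopologicalSpace A] [TopologicalSpace X] {i : C(A, X)}

theorem exists_retraction (hi : IsCofibration i) :
    ∃ r : C(X × I, X × I), (∀ p, (r p).2 = 0 ∨ (r p).1 ∈ range i) ∧
      (∀ x, r (x, 0) = (x, 0)) ∧ ∀ a t, r (i a, t) = (i a, t) := by
  let S : Set (X × I) := {p | p.2 = 0 ∨ p.1 ∈ range i}
  obtain ⟨r, hr₀, hrA⟩ := hi S
    ⟨fun x => ⟨(x, 0), Or.inl rfl⟩, by fun_prop⟩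
    ⟨fun p => ⟨(i p.1, p.2), Or.inr (mem_range_self _)⟩, by fun_prop⟩
    fun _ => rfl
  exact ⟨⟨fun p => (r p).1, by fun_prop⟩, fun p => (r p).2,
    fun x => congrArg Subtype.val (hr₀ x), fun a t => congrArg Subtype.val (hrA a t)⟩

theorem exists_extension_range_subset (hi : IsCofibration i) {Y : Type u} [TopologicalSpace Y]
    (f : C(X, Y)) (H : C(A × I, Y)) (hH : ∀ a, H (a, 0) = f (i a)) :
    ∃ G : C(X × I, Y), (∀ x, G (x, 0) = f x) ∧ (∀ a t, G (i a, t) = H (a, t)) ∧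
      range G ⊆ range f ∪ range H := by
  obtain ⟨r, hr, hr₀, hrA⟩ := hi.exists_retraction
  obtain ⟨G, hG₀, hGA⟩ := hi Y f H hH
  refine ⟨G.comp r, fun x => by simp [hr₀, hG₀], fun a t => by simp [hrA, hGA], ?_⟩
  rintro _ ⟨p, rfl⟩
  obtain ⟨⟨x, t⟩, hp⟩ : ∃ q, r p = q := ⟨_, rfl⟩
  rcases hp ▸ hr p with (rfl : t = 0) | ⟨a, rfl : i a = x⟩
  · exact Or.inl ⟨x, by simp [hp, hG₀]⟩
  · exact Or.inr ⟨(a, t), by simp [hp, hGA]⟩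

end IsCofibration

/-- If `(Y, y₀)` is sequentially 0-connected and `(X, x₀)` is well-pointed (the inclusion
`{x₀} → X` is a cofibration), then every sequence of maps `X → Y` converging to `y₀` is
sequentially (freely) homotopic to a sequence of based maps `(X, x₀) → (Y, y₀)`
converging to `y₀`. -/
theorem seq_homotopic_to_based {X Y : Type u} [TopologicalSpace X] [TopologicalSpace Y]
    (x₀ : X) (y₀ : Y) (hY : SeqZeroConnectedAt Y y₀)
    (hX : IsCofibration (⟨fun _ : PUnit => x₀, continuous_const⟩ : C(PUnit, X)))
    (f : ℕ → C(X, Y)) (hf : ClustersAt f y₀) :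
    ∃ g : ℕ → C(X, Y), (∀ k, g k x₀ = y₀) ∧ ClustersAt g y₀ ∧
      ∃ H : ℕ → C(X × I, Y),
        (∀ k x, H k (x, 0) = f k x) ∧ (∀ k x, H k (x, 1) = g k x) ∧ ClustersAt H y₀ := by
  obtain ⟨α, hα, hα_clusters⟩ :=
    hY (fun k => f k x₀) (Nat.cofinite_eq_atTop ▸ hf.tendsto_apply_s6 x₀)
  let reversePath (k : ℕ) : C(PUnit × I, Y) := (α k).comp ⟨fun p => σ p.2, by fun_prop⟩
  have hreverse : ClustersAt reversePath y₀ :=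
    hα_clusters.of_range_subset fun k => by rintro _ ⟨p, rfl⟩; exact mem_range_self _
  choose H hH₀ hH_path hH_range using fun k =>
    hX.exists_extension_range_subset (f k) (reversePath k) fun _ => by simp [reversePath, hα]
  have hH : ClustersAt H y₀ := hf.of_range_subset_union hreverse hH_range
  let g (k : ℕ) : C(X, Y) := (H k).comp ⟨fun x => (x, 1), by fun_prop⟩
  refine ⟨g, fun k => ?_, hH.of_range_subset fun k => ?_, H, hH₀, fun _ _ => rfl, hH⟩
  · simpa [g, reversePath, (hα k).1] using hH_path k PUnit.unit 1
  · rintro _ ⟨x, rfl⟩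
    exact mem_range_self _
end

section
/- Let Y = Adj(X, x_j, A_j, a_j) be a shrinking adjunction space with X and all A_j compact. Then Y is a Peano continuum if and only if X and each A_j are Peano continua. -/
set_option linter.unusedSectionVars false

open Set Filter Topology

namespace ShrinkingAdjunction

variable (X : Type*) [TopologicalSpace X] (A : ℕ → Type*) [∀ j, TopologicalSpace (A j)]
  (x : ℕ → X) (a : ∀ j, A j)

/-- Gluing relation for the `k`-th finite adjunction space on the carrier `X ⊕ Σ j, A j`:
for `j < k` the copy of `A j` is attached to `x j` along its basepoint `a j`, and for
`j ≥ k` the copy of `A j` is collapsed entirely to `x j`. -/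
def rel (k : ℕ) : (X ⊕ Σ j : ℕ, A j) → (X ⊕ Σ j : ℕ, A j) → Prop := fun p q =>
  ∃ j b, (j < k → b = a j) ∧
    ((p = Sum.inl (x j) ∧ q = Sum.inr ⟨j, b⟩) ∨ (q = Sum.inl (x j) ∧ p = Sum.inr ⟨j, b⟩))

/-- The `k`-th finite adjunction space `Y_k`, with the quotient (weak) topology. -/
def FinAdj (k : ℕ) : Type _ := Quot (rel X A x a k)

instance (k : ℕ) : TopologicalSpace (FinAdj X A x a k) :=
  inferInstanceAs (TopologicalSpace (Quot _))

/-- The bonding retraction `ρ_{k+1,k} : Y_{k+1} → Y_k`, collapsing `A_{k+1}` to `x_{k+1}`. -/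
def bond (k : ℕ) : FinAdj X A x a (k + 1) → FinAdj X A x a k :=
  Quot.lift (Quot.mk _) fun p q h =>
    Quot.sound (by
      obtain ⟨j, b, hj, hpq⟩ := h
      exact ⟨j, b, fun h' => hj (Nat.lt_succ_of_lt h'), hpq⟩)

/-- The shrinking adjunction space `Adj(X, x_j, A_j, a_j)`: the inverse limit of the finite
adjunction spaces `Y_k`, topologized as a subspace of the product `∏ k, Y_k`. -/
def ShrAdj : Type _ :=
  {y : ∀ k, FinAdj X A x a k // ∀ k, bond X A x a k (y (k + 1)) = y k}

instance : TopologicalSpace (ShrAdj X A x a) :=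
  inferInstanceAs (TopologicalSpace
    {y : ∀ k, FinAdj X A x a k // ∀ k, bond X A x a k (y (k + 1)) = y k})

/-- Canonical inclusion of the core `X` into the shrinking adjunction space. -/
def inclX : C(X, ShrAdj X A x a) :=
  ⟨fun z => ⟨fun _ => Quot.mk _ (Sum.inl z), fun _ => rfl⟩, by
    apply Continuous.subtype_mk
    exact continuous_pi fun k => continuous_quot_mk.comp continuous_inl⟩

/-- Canonical inclusion of the attachment space `A j`. -/
def inclA (j : ℕ) : C(A j, ShrAdj X A x a) :=
  ⟨fun b => ⟨fun _ => Quot.mk _ (Sum.inr ⟨j, b⟩), fun _ => rfl⟩, by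
    apply Continuous.subtype_mk
    exact continuous_pi fun k => continuous_quot_mk.comp (continuous_inr.comp continuous_sigmaMk)⟩

/-- The map on the carrier which collapses every attachment space to its attachment point. -/
def coreMap : (X ⊕ Σ j : ℕ, A j) → X := Sum.elim id fun p => x p.1

theorem coreMap_rel (k : ℕ) :
    ∀ p q, rel X A x a k p q → coreMap X A x p = coreMap X A x q := by
  rintro p q ⟨j, b, -, ⟨rfl, rfl⟩ | ⟨rfl, rfl⟩⟩ <;> rfl

/-- The canonical retraction `r : Y → X` collapsing every `A j` to `x j`. -/
def retrCore : C(ShrAdj X A x a, X) :=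
  ⟨fun y => Quot.lift (coreMap X A x) (coreMap_rel X A x a 0) (y.1 0),
    (continuous_quot_lift _
        (continuous_id.sumElim (continuous_sigma fun i => (continuous_const : Continuous fun _ : A i => x i)))).comp
      ((continuous_apply 0).comp continuous_subtype_val)⟩

/-- The map on the carrier collapsing everything except the copy of `A j` to `a j`. -/
def projMap (j : ℕ) : (X ⊕ Σ i : ℕ, A i) → A j :=
  Sum.elim (fun _ => a j) fun p => if h : p.1 = j then h ▸ p.2 else a j

theorem projMap_rel (j : ℕ) :
    ∀ p q, rel X A x a (j + 1) p q → projMap X A a j p = projMap X A a j q := by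
  rintro p q ⟨i, b, hib, ⟨rfl, rfl⟩ | ⟨rfl, rfl⟩⟩ <;>
  · simp only [projMap, Sum.elim_inl, Sum.elim_inr]
    rcases eq_or_ne i j with rfl | h
    · rw [dif_pos rfl]
      first
      | exact (hib (Nat.lt_succ_self i))
      | exact (hib (Nat.lt_succ_self i)).symm
    · rw [dif_neg h]

theorem projMap_continuous (j : ℕ) : Continuous (projMap X A a j) := by
  refine Continuous.sumElim continuous_const (continuous_sigma fun i => ?_)
  rcases eq_or_ne i j with rfl | h
  · simp only [dif_pos rfl]
    exact continuous_id
  · simp only [dif_neg h]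
    exact continuous_const

/-- The canonical retraction `r_j : Y → A j` collapsing the rest of `Y` to `a j`. -/
def retrA (j : ℕ) : C(ShrAdj X A x a, A j) :=
  ⟨fun y => Quot.lift (projMap X A a j) (projMap_rel X A x a j) (y.1 (j + 1)),
    (continuous_quot_lift _ (projMap_continuous X A a j)).comp
      ((continuous_apply (j + 1)).comp continuous_subtype_val)⟩


end ShrinkingAdjunction

open ShrinkingAdjunction

/-- A Peano continuum: a compact, connected, locally path-connected metrizable space. -/
def IsPeanoContinuum (Z : Type*) [TopologicalSpace Z] : Prop :=
  CompactSpace Z ∧ ConnectedSpace Z ∧ LocPathConnectedSpace Z ∧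
    TopologicalSpace.MetrizableSpace Z

/-!
`X` and each `A j` are retracts of `Y`, and compactness, connectedness, local
path-connectedness and metrizability all pass to retracts.

Conversely, `Y` is a closed subspace of the compact product `∏ k, Y k`, and the retractions
onto `X` and the `A j` jointly give a continuous injection of `Y` into the metrizable space
`X × ∏ j, A j`, a closed embedding by compactness. Since `y k` is determined by `y N` for
`k ≤ N`, the sets `{y | y N ∈ P}` with `P` a path-connected neighbourhood in `Y N` form a
neighbourhood basis of `Y`. Such a set is path-connected: the continuous section `Y N → Y`
moves a point of `Y` within its fibre only inside a single `A j` with `j ≥ N`, which is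
path-connected.
-/

theorem IsPeanoContinuum.of_leftInverse {W Z : Type*} [TopologicalSpace W] [TopologicalSpace Z]
    (r : C(W, Z)) (i : C(Z, W)) (h : Function.LeftInverse r i) (hW : IsPeanoContinuum W) :
    IsPeanoContinuum Z := by
  obtain ⟨_, _, hWlpc, _⟩ := hW
  have : LocallyPathConnectedSpace W := hWlpc
  have hr : IsQuotientMap r := .of_inverse i.continuous r.continuous h
  exact ⟨hr.surjective.compactSpace r.continuous, hr.surjective.connectedSpace r.continuous,
    hr.locallyPathConnectedSpace, (h.isEmbedding r.continuous i.continuous).metrizableSpace⟩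

namespace ShrinkingAdjunction

variable {X : Type*} [TopologicalSpace X] {A : ℕ → Type*} [∀ j, TopologicalSpace (A j)]
  {x : ℕ → X} {a : ∀ j, A j}

theorem rel_mono {k' k : ℕ} (hk : k' ≤ k) {p q : X ⊕ Σ j : ℕ, A j}
    (h : rel X A x a k p q) : rel X A x a k' p q := by
  obtain ⟨j, b, hj, hpq⟩ := h
  exact ⟨j, b, fun h' => hj (h'.trans_le hk), hpq⟩

theorem exists_mk_eq {k : ℕ} (q : FinAdj X A x a k) : ∃ p, Quot.mk (rel X A x a k) p = q :=
  Quot.exists_rep q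

theorem mk_inr_eq_mk_inl {k j : ℕ} (b : A j) (h : j < k → b = a j) :
    Quot.mk (rel X A x a k) (.inr ⟨j, b⟩) = Quot.mk (rel X A x a k) (.inl (x j)) :=
  Quot.sound ⟨j, b, h, .inr ⟨rfl, rfl⟩⟩

theorem inclA_basepoint (j : ℕ) : inclA X A x a j (a j) = inclX X A x a (x j) :=
  Subtype.ext <| funext fun _ => mk_inr_eq_mk_inl _ fun _ => rfl

theorem projMap_inr_self (j : ℕ) (b : A j) : projMap X A a j (.inr ⟨j, b⟩) = b :=
  dif_pos rfl

theorem retrA_inclA (j : ℕ) (b : A j) : retrA X A x a j (inclA X A x a j b) = b :=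
  projMap_inr_self (X := X) j b

theorem projMap_inr_of_ne {i j : ℕ} (h : i ≠ j) (b : A i) :
    projMap X A a j (.inr ⟨i, b⟩) = a j :=
  dif_neg h

theorem eq_inr_projMap_of_ne {j : ℕ} {p : X ⊕ Σ i : ℕ, A i} (h : projMap X A a j p ≠ a j) :
    p = .inr ⟨j, projMap X A a j p⟩ := by
  rcases p with z | ⟨i, b⟩
  · exact absurd rfl h
  · rcases eq_or_ne i j with rfl | hij
    · rw [projMap_inr_self]
    · exact absurd (projMap_inr_of_ne hij b) h

def bondOfLE {k' k : ℕ} (hk : k' ≤ k) : FinAdj X A x a k → FinAdj X A x a k' :=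
  Quot.lift (Quot.mk _) fun _ _ h => Quot.sound (rel_mono hk h)

theorem continuous_bondOfLE {k' k : ℕ} (hk : k' ≤ k) :
    Continuous (bondOfLE (x := x) (a := a) hk) :=
  continuous_quot_lift _ continuous_quot_mk

theorem val_eq_bondOfLE (y : ShrAdj X A x a) {k' k : ℕ} (hk : k' ≤ k) :
    y.1 k' = bondOfLE hk (y.1 k) := by
  induction k, hk using Nat.le_induction with
  | base => obtain ⟨p, hp⟩ := exists_mk_eq (y.1 k'); rw [← hp]; rfl
  | succ k hk ih =>
    obtain ⟨p, hp⟩ := exists_mk_eq (y.1 (k + 1))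
    rw [ih, ← y.2 k, ← hp]
    rfl

def core (k : ℕ) : FinAdj X A x a k → X :=
  Quot.lift (coreMap X A x) (coreMap_rel X A x a k)

def proj {j k : ℕ} (h : j < k) : FinAdj X A x a k → A j :=
  Quot.lift (projMap X A a j) fun p q hr => projMap_rel X A x a j p q (rel_mono h hr)

theorem retrCore_eq_core (y : ShrAdj X A x a) (k : ℕ) :
    retrCore X A x a y = core k (y.1 k) := by
  change core 0 (y.1 0) = _
  obtain ⟨p, hp⟩ := exists_mk_eq (y.1 k)
  rw [val_eq_bondOfLE y k.zero_le, ← hp]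
  rfl

theorem retrA_eq_proj (y : ShrAdj X A x a) {j k : ℕ} (h : j < k) :
    retrA X A x a j y = proj h (y.1 k) := by
  change proj j.lt_succ_self (y.1 (j + 1)) = _
  obtain ⟨p, hp⟩ := exists_mk_eq (y.1 k)
  rw [val_eq_bondOfLE y h, ← hp]
  rfl

theorem continuous_coreMap : Continuous (coreMap X A x) :=
  continuous_id.sumElim <|
    continuous_sigma fun i => (continuous_const : Continuous fun _ : A i => x i)

theorem continuous_core (k : ℕ) : Continuous (core (x := x) (a := a) k) :=
  continuous_quot_lift _ continuous_coreMap

theorem continuous_proj {j k : ℕ} (h : j < k) : Continuous (proj (x := x) (a := a) h) :=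
  continuous_quot_lift _ (projMap_continuous X A a j)

theorem mk_eq_mk_inl_coreMap {k : ℕ} {p : X ⊕ Σ j : ℕ, A j}
    (h : ∀ j < k, projMap X A a j p = a j) :
    Quot.mk (rel X A x a k) p = Quot.mk _ (.inl (coreMap X A x p)) := by
  rcases p with z | ⟨j, b⟩
  · rfl
  · exact mk_inr_eq_mk_inl b fun hj => (projMap_inr_self (X := X) j b).symm.trans (h j hj)

theorem mk_eq_mk_iff {k : ℕ} {p q : X ⊕ Σ j : ℕ, A j} :
    Quot.mk (rel X A x a k) p = Quot.mk (rel X A x a k) q ↔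
      coreMap X A x p = coreMap X A x q ∧ ∀ j < k, projMap X A a j p = projMap X A a j q := by
  refine ⟨fun h => ⟨congrArg (core k) h, fun j hj => congrArg (proj hj) h⟩, ?_⟩
  rintro ⟨hcore, hpr⟩
  by_cases hflat : ∀ j < k, projMap X A a j p = a j
  · rw [mk_eq_mk_inl_coreMap hflat,
      mk_eq_mk_inl_coreMap fun j hj => (hpr j hj).symm.trans (hflat j hj), hcore]
  · obtain ⟨j, hj, hne⟩ := not_forall₂.1 hflat
    rw [eq_inr_projMap_of_ne (p := p) hne, eq_inr_projMap_of_ne (p := q) (hpr j hj ▸ hne),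
      hpr j hj]

def toProd (k : ℕ) (q : FinAdj X A x a k) : X × ∀ j, A j :=
  (core k q, fun j => if h : j < k then proj h q else a j)

theorem continuous_toProd (k : ℕ) : Continuous (toProd (x := x) (a := a) k) := by
  refine (continuous_core k).prodMk (continuous_pi fun j => ?_)
  by_cases h : j < k
  · simpa only [dif_pos h] using continuous_proj h
  · simpa only [dif_neg h] using continuous_const

theorem injective_toProd (k : ℕ) : Function.Injective (toProd (x := x) (a := a) k) := by
  intro q q' h
  obtain ⟨p, rfl⟩ := exists_mk_eq q
  obtain ⟨p', rfl⟩ := exists_mk_eq q'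
  refine mk_eq_mk_iff.2 ⟨congrArg Prod.fst h, fun j hj => ?_⟩
  have hj' := congrFun (congrArg Prod.snd h) j
  simp only [toProd, dif_pos hj] at hj'
  exact hj'

theorem toProd_val (y : ShrAdj X A x a) (k : ℕ) :
    toProd k (y.1 k) =
      (retrCore X A x a y, fun j => if j < k then retrA X A x a j y else a j) := by
  refine Prod.ext (retrCore_eq_core y k).symm (funext fun j => ?_)
  by_cases h : j < k
  · simp only [toProd, dif_pos h, if_pos h, retrA_eq_proj y h]
  · simp only [toProd, dif_neg h, if_neg h]

theorem injective_retr :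
    Function.Injective fun y : ShrAdj X A x a =>
      (retrCore X A x a y, fun j => retrA X A x a j y) := by
  intro y y' h
  refine Subtype.ext (funext fun k => injective_toProd k ?_)
  simp only [Prod.mk.injEq, funext_iff] at h
  simp only [toProd_val, h.1, h.2]

instance t2Space_finAdj [T2Space X] [∀ j, T2Space (A j)] (k : ℕ) :
    T2Space (FinAdj X A x a k) :=
  .of_injective_continuous (injective_toProd k) (continuous_toProd k)

instance compactSpace_finAdj [CompactSpace X] [∀ j, CompactSpace (A j)] (k : ℕ) :
    CompactSpace (FinAdj X A x a k) := by
  let g : (X ⊕ Σ j : Fin k, A j) → FinAdj X A x a k :=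
    Sum.elim (fun z => Quot.mk _ (.inl z)) fun p => Quot.mk _ (.inr ⟨p.1, p.2⟩)
  have hg : Continuous g := (continuous_quot_mk.comp continuous_inl).sumElim
    (continuous_sigma fun _ => continuous_quot_mk.comp (continuous_inr.comp continuous_sigmaMk))
  refine Function.Surjective.compactSpace hg fun q => ?_
  obtain ⟨p | ⟨j, b⟩, rfl⟩ := exists_mk_eq q
  · exact ⟨.inl p, rfl⟩
  · by_cases h : j < k
    · exact ⟨.inr ⟨⟨j, h⟩, b⟩, rfl⟩
    · exact ⟨.inl (x j), (mk_inr_eq_mk_inl b fun h' => absurd h' h).symm⟩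

theorem continuous_bond (k : ℕ) : Continuous (bond X A x a k) :=
  continuous_quot_lift _ continuous_quot_mk

instance compactSpace_shrAdj [T2Space X] [∀ j, T2Space (A j)] [CompactSpace X]
    [∀ j, CompactSpace (A j)] : CompactSpace (ShrAdj X A x a) := by
  have hclosed :
      IsClosed {y : ∀ k, FinAdj X A x a k | ∀ k, bond X A x a k (y (k + 1)) = y k} := by
    simp only [ofPred_forall]
    exact isClosed_iInter fun k => isClosed_eq
      ((continuous_bond k).comp (continuous_apply _)) (continuous_apply k)
  exact isCompact_iff_compactSpace.1 hclosed.isCompact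

theorem metrizableSpace_shrAdj [CompactSpace X] [∀ j, CompactSpace (A j)]
    [TopologicalSpace.MetrizableSpace X] [∀ j, TopologicalSpace.MetrizableSpace (A j)] :
    TopologicalSpace.MetrizableSpace (ShrAdj X A x a) := by
  have hretr : Continuous fun y : ShrAdj X A x a =>
      (retrCore X A x a y, fun j => retrA X A x a j y) :=
    (retrCore X A x a).continuous.prodMk (continuous_pi fun j => (retrA X A x a j).continuous)
  exact (hretr.isClosedEmbedding injective_retr).isEmbedding.metrizableSpace

theorem continuous_val_apply (N : ℕ) : Continuous fun y : ShrAdj X A x a => y.1 N :=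
  (continuous_apply N).comp continuous_subtype_val

theorem ext_of_le {y y' : ShrAdj X A x a} (K : ℕ) (h : ∀ k, K ≤ k → y.1 k = y'.1 k) :
    y = y' :=
  Subtype.ext <| funext fun k => by
    rw [val_eq_bondOfLE y (le_max_left k K), val_eq_bondOfLE y' (le_max_left k K),
      h _ (le_max_right k K)]

theorem inclA_val_of_le {N j : ℕ} (h : N ≤ j) (b : A j) :
    (inclA X A x a j b).1 N = (inclX X A x a (x j)).1 N :=
  mk_inr_eq_mk_inl b fun h' => absurd h' h.not_gt

theorem eq_inclX_or_eq_inclA (y : ShrAdj X A x a) :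
    (∃ z, y = inclX X A x a z) ∨ ∃ j b, y = inclA X A x a j b := by
  by_cases hflat : ∀ j, retrA X A x a j y = a j
  · exact .inl ⟨retrCore X A x a y, injective_retr (Prod.ext rfl (funext hflat))⟩
  obtain ⟨j, hj⟩ := not_forall.1 hflat
  refine .inr ⟨j, retrA X A x a j y, ext_of_le (j + 1) fun k hk => ?_⟩
  obtain ⟨p, hp⟩ := exists_mk_eq (y.1 k)
  have hpj : projMap X A a j p = retrA X A x a j y := by
    rw [retrA_eq_proj y hk, ← hp]
    rfl
  rw [← hp, eq_inr_projMap_of_ne (p := p) (hpj ▸ hj), hpj]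
  rfl

def secMap (N : ℕ) : (X ⊕ Σ j : ℕ, A j) → ShrAdj X A x a :=
  Sum.elim (inclX X A x a) fun p =>
    if p.1 < N then inclA X A x a p.1 p.2 else inclX X A x a (x p.1)

theorem secMap_inr_of_lt {N j : ℕ} (h : j < N) (b : A j) :
    secMap (x := x) (a := a) N (.inr ⟨j, b⟩) = inclA X A x a j b :=
  if_pos h

theorem secMap_inr_of_le {N j : ℕ} (h : N ≤ j) (b : A j) :
    secMap (x := x) (a := a) N (.inr ⟨j, b⟩) = inclX X A x a (x j) :=
  if_neg h.not_gt

theorem secMap_inr_eq_inclX {N j : ℕ} {b : A j} (hb : j < N → b = a j) :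
    secMap (x := x) (a := a) N (.inr ⟨j, b⟩) = inclX X A x a (x j) := by
  rcases lt_or_ge j N with h | h
  · rw [secMap_inr_of_lt h, hb h, inclA_basepoint]
  · exact secMap_inr_of_le h b

def sec (N : ℕ) : FinAdj X A x a N → ShrAdj X A x a :=
  Quot.lift (secMap N) <| by
    rintro p q ⟨j, b, hb, ⟨rfl, rfl⟩ | ⟨rfl, rfl⟩⟩
    · exact (secMap_inr_eq_inclX hb).symm
    · exact secMap_inr_eq_inclX hb

theorem continuous_sec (N : ℕ) : Continuous (sec (x := x) (a := a) N) := by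
  refine continuous_quot_lift _ <|
    (inclX X A x a).continuous.sumElim (continuous_sigma fun j => ?_)
  by_cases h : j < N
  · simpa only [if_pos h] using (inclA X A x a j).continuous
  · simpa only [if_neg h] using continuous_const

theorem sec_val (N : ℕ) (q : FinAdj X A x a N) : (sec N q).1 N = q := by
  obtain ⟨p | ⟨j, b⟩, rfl⟩ := exists_mk_eq q
  · rfl
  rcases lt_or_ge j N with h | h
  · exact congrArg (fun y : ShrAdj X A x a => y.1 N) (secMap_inr_of_lt h b)
  · exact (congrArg (fun y : ShrAdj X A x a => y.1 N) (secMap_inr_of_le h b)).trans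
      (inclA_val_of_le h b).symm

theorem joinedIn_sec_val [∀ j, PathConnectedSpace (A j)] (N : ℕ) (y : ShrAdj X A x a) :
    JoinedIn {y' | y'.1 N = y.1 N} y (sec N (y.1 N)) := by
  rcases eq_inclX_or_eq_inclA y with ⟨z, rfl⟩ | ⟨j, b, rfl⟩
  · exact JoinedIn.refl rfl
  rcases lt_or_ge j N with h | h
  · rw [show sec N ((inclA X A x a j b).1 N) = inclA X A x a j b from secMap_inr_of_lt h b]
    exact JoinedIn.refl rfl
  · rw [show sec N ((inclA X A x a j b).1 N) = inclA X A x a j (a j) from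
      (secMap_inr_of_le h b).trans (inclA_basepoint j).symm]
    obtain ⟨γ⟩ := PathConnectedSpace.joined b (a j)
    exact ⟨γ.map (inclA X A x a j).continuous,
      fun t => (inclA_val_of_le h _).trans (inclA_val_of_le h b).symm⟩

theorem isPathConnected_setOf_val_mem [∀ j, PathConnectedSpace (A j)] {N : ℕ}
    {P : Set (FinAdj X A x a N)} (hP : IsPathConnected P) :
    IsPathConnected {y : ShrAdj X A x a | y.1 N ∈ P} := by
  obtain ⟨q, hq, hPq⟩ := hP
  refine ⟨sec N q, by rwa [mem_ofPred_eq, sec_val], fun {y} hy => ?_⟩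
  have hfibre : JoinedIn {y' : ShrAdj X A x a | y'.1 N ∈ P} y (sec N (y.1 N)) :=
    (joinedIn_sec_val N y).mono fun y' (h : y'.1 N = y.1 N) => show y'.1 N ∈ P from h ▸ hy
  obtain ⟨γ, hγ⟩ := hPq hy
  have hbase : JoinedIn {y' : ShrAdj X A x a | y'.1 N ∈ P} (sec N q) (sec N (y.1 N)) :=
    ⟨γ.map (continuous_sec N), fun t => by
      change (sec N (γ t)).1 N ∈ P
      rw [sec_val]
      exact hγ t⟩
  exact hbase.trans hfibre.symm

theorem exists_nhds_preimage_val_apply_subset {y : ShrAdj X A x a} {U : Set (ShrAdj X A x a)}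
    (hU : U ∈ 𝓝 y) :
    ∃ N, ∃ t ∈ 𝓝 (y.1 N), (fun y' : ShrAdj X A x a => y'.1 N) ⁻¹' t ⊆ U := by
  have hanti : Antitone fun k => comap (fun y' : ShrAdj X A x a => y'.1 k) (𝓝 (y.1 k)) := by
    intro k N hk
    have hfactor : (fun y' : ShrAdj X A x a => y'.1 k) = bondOfLE hk ∘ fun y' => y'.1 N :=
      funext fun y' => val_eq_bondOfLE y' hk
    dsimp only
    rw [hfactor, ← comap_comap]
    exact comap_mono
      ((continuous_bondOfLE hk).tendsto' _ _ (val_eq_bondOfLE y hk).symm).le_comap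
  have hnhds : 𝓝 y = ⨅ k, comap (fun y' : ShrAdj X A x a => y'.1 k) (𝓝 (y.1 k)) := by
    rw [show 𝓝 y = comap Subtype.val (𝓝 y.1) from nhds_induced _ _, nhds_pi, Filter.pi,
      comap_iInf]
    simp only [comap_comap]
    rfl
  rw [hnhds, mem_iInf_of_directed hanti.directed_ge] at hU
  exact hU.imp fun N hN => mem_comap.1 hN

instance locallyPathConnectedSpace_finAdj [LocallyPathConnectedSpace X]
    [∀ j, LocallyPathConnectedSpace (A j)] (k : ℕ) :
    LocallyPathConnectedSpace (FinAdj X A x a k) :=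
  Quot.locallyPathConnectedSpace

theorem locallyPathConnectedSpace_shrAdj [LocallyPathConnectedSpace X]
    [∀ j, LocallyPathConnectedSpace (A j)] [∀ j, PathConnectedSpace (A j)] :
    LocallyPathConnectedSpace (ShrAdj X A x a) := by
  refine ⟨fun y => ⟨fun U => ⟨fun hU => ?_, ?_⟩⟩⟩
  · obtain ⟨N, t, ht, htU⟩ := exists_nhds_preimage_val_apply_subset hU
    obtain ⟨P, ⟨hP, hPconn⟩, hPt⟩ := (path_connected_basis (y.1 N)).mem_iff.1 ht
    exact ⟨_, ⟨(continuous_val_apply N).continuousAt.preimage_mem_nhds hP,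
      isPathConnected_setOf_val_mem hPconn⟩, fun y' hy' => htU (hPt hy')⟩
  · rintro ⟨s, ⟨hs, -⟩, hsU⟩
    exact mem_of_superset hs hsU

theorem pathConnectedSpace_shrAdj [PathConnectedSpace X] [∀ j, PathConnectedSpace (A j)] :
    PathConnectedSpace (ShrAdj X A x a) := by
  have : PathConnectedSpace (FinAdj X A x a 0) := by
    refine Function.Surjective.pathConnectedSpace (f := fun z => Quot.mk _ (.inl z))
      (fun q => ?_) (continuous_quot_mk.comp continuous_inl)
    obtain ⟨p | ⟨j, b⟩, rfl⟩ := exists_mk_eq q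
    · exact ⟨p, rfl⟩
    · exact ⟨x j, (mk_inr_eq_mk_inl b fun h => absurd h j.not_lt_zero).symm⟩
  rw [pathConnectedSpace_iff_univ]
  simpa only [mem_univ, ofPred_true] using
    isPathConnected_setOf_val_mem (x := x) (a := a) (pathConnectedSpace_iff_univ.1 this)

end ShrinkingAdjunction

theorem isPeanoContinuum_shrAdj_iff_general (X : Type*) [TopologicalSpace X]
    (A : ℕ → Type*) [∀ j, TopologicalSpace (A j)] (x : ℕ → X) (a : ∀ j, A j) :
    IsPeanoContinuum (ShrAdj X A x a) ↔
      (IsPeanoContinuum X ∧ ∀ j, IsPeanoContinuum (A j)) := by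
  refine ⟨fun hY => ⟨hY.of_leftInverse (retrCore X A x a) (inclX X A x a) fun _ => rfl,
    fun j => hY.of_leftInverse (retrA X A x a j) (inclA X A x a j) (retrA_inclA j)⟩, ?_⟩
  rintro ⟨⟨_, _, hXlpc, _⟩, hA⟩
  have : LocallyPathConnectedSpace X := hXlpc
  have : PathConnectedSpace X := .of_locallyPathConnectedSpace
  have (j : ℕ) : CompactSpace (A j) := (hA j).1
  have (j : ℕ) : TopologicalSpace.MetrizableSpace (A j) := (hA j).2.2.2
  have (j : ℕ) : LocallyPathConnectedSpace (A j) := (hA j).2.2.1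
  have (j : ℕ) : PathConnectedSpace (A j) :=
    have := (hA j).2.1
    .of_locallyPathConnectedSpace
  exact ⟨compactSpace_shrAdj, pathConnectedSpace_shrAdj.connectedSpace,
    locallyPathConnectedSpace_shrAdj, metrizableSpace_shrAdj⟩

/-- A shrinking adjunction space built from compact Hausdorff pieces is a Peano continuum
if and only if the core `X` and each attachment space `A j` are Peano continua. -/
theorem isPeanoContinuum_shrAdj_iff (X : Type*) [TopologicalSpace X]
    (A : ℕ → Type*) [∀ j, TopologicalSpace (A j)] (x : ℕ → X) (a : ∀ j, A j)
    [T2Space X] [∀ j, T2Space (A j)] [CompactSpace X] [∀ j, CompactSpace (A j)] :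
    IsPeanoContinuum (ShrAdj X A x a) ↔
      (IsPeanoContinuum X ∧ ∀ j, IsPeanoContinuum (A j)) :=
  isPeanoContinuum_shrAdj_iff_general X A x a
end

section
/- Let p : X̃ → X be a generalized covering map. Then for every n ≥ 2, the induced homomorphism p_# : π_n(X̃, x̃₀) → π_n(X, x₀) is an isomorphism, and p_# : π_1(X̃, x̃₀) → π_1(X, x₀) is injective. -/
open Set Topology

universe u

/-- `p : E → X` is a **generalized covering map**: `E` is nonempty, path connected and locally
path connected, and for every map `f : (Y, y) → (X, x)` from a path-connected, locally
path-connected space and every `e ∈ p⁻¹(x)` such that `f_#(π₁(Y,y)) ≤ p_#(π₁(E,e))` (every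
loop `f ∘ γ` is path-homotopic to some `p ∘ δ`), there is a unique based lift of `f`. -/
def IsGenCoveringMap {E X : Type u} [TopologicalSpace E] [TopologicalSpace X]
    (p : C(E, X)) : Prop :=
  Nonempty E ∧ PathConnectedSpace E ∧ LocallyPathConnectedSpace E ∧
  ∀ (Y : Type u) [TopologicalSpace Y] [PathConnectedSpace Y] [LocallyPathConnectedSpace Y]
    (y : Y) (f : C(Y, X)) (e : E) (hfy : f y = p e),
    (∀ γ : Path y y, ∃ δ : Path e e,
      (δ.map p.continuous).Homotopic ((γ.map f.continuous).cast hfy.symm hfy.symm)) →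
    ∃! g : C(Y, E), p.comp g = f ∧ g y = e

open scoped Topology.Homotopy

/-!
Everything comes from unique lifting of maps out of the contractible, locally path-connected
spaces `Iⁿ` and `I × Iⁿ`. Given a homotopy `H : I × Iⁿ → X` rel `S` between `p ∘ f₀` and
`p ∘ f₁`, lift it to `G` with `G (0, y) = f₀ y` for a point `y ∈ S`. Uniqueness of lifts from `Iⁿ`
identifies `G (0, ·)` with `f₀`; each track `t ↦ G (t, z)`, `z ∈ S`, lies over the constant path
`H (·, z)` and is therefore constant, which in turn identifies `G (1, ·)` with `f₁`. With `S` the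
endpoints of `I` this is injectivity on `π₁`, and with `S = ∂Iⁿ` injectivity on `πₙ`. For
surjectivity, lift an `n`-loop `Iⁿ → X`: for `n ≥ 2` the boundary `∂Iⁿ` is path-connected and lies
over the base point, so the lift is constant on it and is again an `n`-loop.
-/

open ContinuousMap unitInterval

instance Pi.contractibleSpace {ι : Type*} {X : ι → Type*} [∀ i, TopologicalSpace (X i)]
    [∀ i, ContractibleSpace (X i)] : ContractibleSpace (∀ i, X i) := by
  rw [contractible_iff_id_nullhomotopic]
  choose x hx using fun i => id_nullhomotopic (X i)
  exact ⟨x, ⟨Homotopy.pi fun i => (hx i).some.compContinuousMap (.eval i)⟩⟩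

instance : ContractibleSpace I :=
  (convex_Icc (0 : ℝ) 1).contractibleSpace (nonempty_Icc.2 zero_le_one)

instance : LocallyPathConnectedSpace I :=
  (convex_Icc (0 : ℝ) 1).locallyPathConnectedSpace

instance ULift.pathConnectedSpace {Y : Type*} [TopologicalSpace Y] [PathConnectedSpace Y] :
    PathConnectedSpace (ULift Y) :=
  ULift.up_surjective.pathConnectedSpace continuous_uliftUp

instance ULift.locallyPathConnectedSpace {Y : Type*} [TopologicalSpace Y]
    [LocallyPathConnectedSpace Y] : LocallyPathConnectedSpace (ULift Y) :=
  Homeomorph.ulift.isOpenEmbedding.locallyPathConnectedSpace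

theorem Cube.zero_mem_boundary {N : Type*} [Nonempty N] : (0 : I^N) ∈ Cube.boundary N :=
  ⟨Classical.arbitrary N, Or.inl rfl⟩

theorem Cube.isPathConnected_boundary {N : Type*} [Nontrivial N] :
    IsPathConnected (Cube.boundary N) := by
  classical
  refine ⟨0, zero_mem_boundary, fun z ⟨i, hi⟩ => ?_⟩
  -- Shrink `z k` to `0` inside the face `{w | w i = z i}`,
  -- then contract to `0` inside the face `{w | w k = 0}`.
  obtain ⟨k, hk⟩ := exists_ne i
  set z' := Function.update z k 0
  have h₁ : JoinedIn (Cube.boundary N) 0 z' :=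
    ⟨{ toFun := fun t j => t * z' j
       source' := by ext; simp
       target' := by ext; simp }, fun t => ⟨k, Or.inl (by simp [z'])⟩⟩
  have h₂ : JoinedIn (Cube.boundary N) z' z :=
    ⟨{ toFun := fun t => Function.update z k (t * z k)
       source' := by simp [z']
       target' := by simp }, fun t => ⟨i, by simpa [Function.update_of_ne hk.symm] using hi⟩⟩
  exact h₁.trans h₂

namespace GenLoop

variable {N X Y : Type*} [TopologicalSpace X] [TopologicalSpace Y] {x : X} {y : Y}

def map (f : C(X, Y)) (hf : f x = y) (γ : Ω^ N X x) : Ω^ N Y y :=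
  ⟨f.comp γ, fun t ht => by rw [comp_apply, coe_coe, GenLoop.boundary γ t ht, hf]⟩

theorem Homotopic.map {γ γ' : Ω^ N X x} (h : Homotopic γ γ') (f : C(X, Y)) (hf : f x = y) :
    Homotopic (map f hf γ) (map f hf γ') :=
  h.comp_continuousMap f

theorem map_transAt [DecidableEq N] (f : C(X, Y)) (hf : f x = y) (i : N) (γ γ' : Ω^ N X x) :
    map f hf (transAt i γ γ') = transAt i (map f hf γ) (map f hf γ') := by
  ext t
  change f (transAt i γ γ' t) = _
  simp only [transAt, coe_copy]
  split_ifs <;> rfl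

end GenLoop

noncomputable def HomotopyGroup.map {N X Y : Type*} [DecidableEq N] [Nonempty N]
    [TopologicalSpace X] [TopologicalSpace Y] {x : X} {y : Y} (f : C(X, Y)) (hf : f x = y) :
    HomotopyGroup N X x →* HomotopyGroup N Y y :=
  MonoidHom.mk' (Quotient.map (GenLoop.map f hf) fun _ _ h => h.map f hf) fun a b =>
    Quotient.inductionOn₂ a b fun γ γ' => (congrArg _ mul_spec).trans <|
      (congrArg _ (GenLoop.map_transAt f hf (Classical.arbitrary N) γ' γ)).trans mul_spec.symm

namespace IsGenCoveringMap

variable {E X : Type u} [TopologicalSpace E] [TopologicalSpace X] {p : C(E, X)}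

-- The lifting property is postulated only for domains in `Type u`, hence the `ULift`.
theorem eq_of_comp_eq (hp : IsGenCoveringMap p) {Y : Type} [TopologicalSpace Y]
    [PathConnectedSpace Y] [LocallyPathConnectedSpace Y] {g₁ g₂ : C(Y, E)}
    (h : p.comp g₁ = p.comp g₂) (y : Y) (hy : g₁ y = g₂ y) : g₁ = g₂ := by
  let down : C(ULift.{u} Y, Y) := ⟨ULift.down, continuous_uliftDown⟩
  obtain ⟨g, -, hg⟩ := hp.2.2.2 (ULift Y) ⟨y⟩ (p.comp (g₁.comp down)) (g₁ y) rfl fun γ =>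
    ⟨γ.map (g₁.comp down).continuous, .refl _⟩
  have h₁ := hg (g₁.comp down) ⟨rfl, rfl⟩
  have h₂ := hg (g₂.comp down) ⟨by rw [← comp_assoc, ← h, comp_assoc], hy.symm⟩
  ext z
  exact congr($(h₁.trans h₂.symm) ⟨z⟩)

theorem exists_lift (hp : IsGenCoveringMap p) {Y : Type} [TopologicalSpace Y]
    [SimplyConnectedSpace Y] [LocallyPathConnectedSpace Y] (f : C(Y, X)) (y : Y) (e : E)
    (he : f y = p e) : ∃ g : C(Y, E), p.comp g = f ∧ g y = e := by
  obtain ⟨g, ⟨hpg, hg⟩, -⟩ := hp.2.2.2 (ULift Y) ⟨y⟩ (f.comp ⟨ULift.down, continuous_uliftDown⟩)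
    e he fun γ => by
      obtain ⟨H⟩ := (SimplyConnectedSpace.paths_homotopic (γ.map continuous_uliftDown)
        (.refl y)).map f
      exact ⟨.refl e, ⟨HomotopyRel.cast H.symm (by ext; simp [he]) rfl⟩⟩
  exact ⟨g.comp ⟨ULift.up, continuous_uliftUp⟩, by ext z; exact congr($hpg ⟨z⟩), hg⟩

theorem eq_of_isPathConnected (hp : IsGenCoveringMap p) {Y : Type*} [TopologicalSpace Y]
    {S : Set Y} (hS : IsPathConnected S) (F : C(Y, E)) {x : X} (hF : ∀ z ∈ S, p (F z) = x)
    {a b : Y} (ha : a ∈ S) (hb : b ∈ S) : F a = F b := by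
  obtain ⟨γ, hγ⟩ := hS.joinedIn a ha b hb
  have := hp.eq_of_comp_eq (g₁ := .const I (F a)) (g₂ := F.comp γ)
    (by ext t; simp [hF _ (hγ t), hF a ha]) 0 (by simp)
  simpa using congr($this 1)

theorem homotopicRel_of_homotopicRel_comp (hp : IsGenCoveringMap p) {Y : Type}
    [TopologicalSpace Y] [ContractibleSpace Y] [LocallyPathConnectedSpace Y] {f₀ f₁ : C(Y, E)}
    {S : Set Y} {y : Y} (hy : y ∈ S) (h : f₀ y = f₁ y)
    (hH : (p.comp f₀).HomotopicRel (p.comp f₁) S) : f₀.HomotopicRel f₁ S := by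
  obtain ⟨H⟩ := hH
  obtain ⟨G, hpG, hG⟩ := hp.exists_lift H.toContinuousMap (0, y) (f₀ y) (by simp)
  have hpG' (q : I × Y) : p (G q) = H q := congr($hpG q)
  have hG₀ : G.comp ((const Y 0).prodMk (.id Y)) = f₀ :=
    hp.eq_of_comp_eq (by ext z; simp [hpG']) y hG
  have hG_rel (t : I) (z : Y) (hz : z ∈ S) : G (t, z) = f₀ z := by
    have := hp.eq_of_comp_eq (g₁ := G.comp ((ContinuousMap.id I).prodMk (const I z)))
      (g₂ := const I (f₀ z)) (by ext s; simp [hpG', H.eq_fst s hz]) 0 congr($hG₀ z)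
    exact congr($this t)
  have hG₁ : G.comp ((const Y 1).prodMk (.id Y)) = f₁ :=
    hp.eq_of_comp_eq (by ext z; simp [hpG']) y (by simpa [← h] using hG_rel 1 y hy)
  exact ⟨⟨⟨G, fun z => congr($hG₀ z), fun z => congr($hG₁ z)⟩, hG_rel⟩⟩

theorem homotopic_of_homotopic_map (hp : IsGenCoveringMap p) {e e' : E} {δ δ' : Path e e'}
    (h : (δ.map p.continuous).Homotopic (δ'.map p.continuous)) : δ.Homotopic δ' :=
  hp.homotopicRel_of_homotopicRel_comp (y := 0) (by simp) (by simp) h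

variable {N : Type} [DecidableEq N] {e : E} {x : X}

theorem homotopyGroup_map_injective (hp : IsGenCoveringMap p) [Nonempty N] (he : p e = x) :
    Function.Injective (HomotopyGroup.map (N := N) p he) := by
  rintro ⟨γ⟩ ⟨γ'⟩ h
  have h0 : (0 : I^N) ∈ Cube.boundary N := Cube.zero_mem_boundary
  exact Quotient.sound <| hp.homotopicRel_of_homotopicRel_comp h0
    ((γ.2 0 h0).trans (γ'.2 0 h0).symm) (Quotient.exact h)

theorem homotopyGroup_map_surjective (hp : IsGenCoveringMap p) [Nontrivial N] (he : p e = x) :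
    Function.Surjective (HomotopyGroup.map (N := N) p he) := by
  rintro ⟨γ⟩
  have h0 : (0 : I^N) ∈ Cube.boundary N := Cube.zero_mem_boundary
  obtain ⟨g, hpg, hg⟩ := hp.exists_lift γ.1 0 e (by rw [γ.2 0 h0, he])
  have hg_boundary (z : I^N) (hz : z ∈ Cube.boundary N) : g z = e :=
    (hp.eq_of_isPathConnected Cube.isPathConnected_boundary g
      (fun z hz => by rw [← comp_apply p g, hpg, γ.2 z hz]) hz h0).trans hg
  exact ⟨⟦⟨g, hg_boundary⟩⟧, congrArg _ (Subtype.ext hpg)⟩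

end IsGenCoveringMap

/-- A generalized covering map induces an isomorphism on `π_n` for every `n ≥ 2`
(here `n + 2`), and an injection on `π_1`. -/
theorem genCoveringMap_pi_iso {E X : Type u} [TopologicalSpace E] [TopologicalSpace X]
    (p : C(E, X)) (hp : IsGenCoveringMap p) (e₀ : E) (x₀ : X) (he : p e₀ = x₀) :
    (∀ δ δ' : Path e₀ e₀,
      (δ.map p.continuous).Homotopic (δ'.map p.continuous) → δ.Homotopic δ') ∧
    ∀ n : ℕ, ∃ Φ : HomotopyGroup (Fin (n + 2)) E e₀ →* HomotopyGroup (Fin (n + 2)) X x₀,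
      (∀ f : GenLoop (Fin (n + 2)) E e₀,
        Φ ⟦f⟧ = ⟦(⟨p.comp f.1, fun y hy => by
            rw [ContinuousMap.comp_apply, f.2 y hy, he]⟩ :
          GenLoop (Fin (n + 2)) X x₀)⟧) ∧
      Function.Bijective Φ :=
  ⟨fun _ _ => hp.homotopic_of_homotopic_map,
    fun _ => ⟨HomotopyGroup.map p he, fun _ => rfl,
      hp.homotopyGroup_map_injective he, hp.homotopyGroup_map_surjective he⟩⟩
end
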